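/- For all positive integers n, the sum of Φ(d) over all positive divisors d of n equals 2^n − 1. -/

import Mathlib

/-!
Sort the nonempty subsets `A` of `{1, …, n}` by `g = gcd(gcd A, n)`, a divisor of `n`. Writing
`n = g m`, the subsets in the class of `g` are exactly the images under `x ↦ g x` of the nonempty
subsets of `{1, …, m}` whose gcd is coprime to `m`, of which there are `Φ(m)`. Summing over the
divisors `g` therefore counts all `2 ^ n - 1` nonempty subsets once.
-/

/-- `Phi n` is the number of nonempty subsets `A` of `{1,2,...,n}` such that
`gcd(A)` is relatively prime to `n`. -/
def Phi (n : ℕ) : ℕ :=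
  ((Finset.Icc 1 n).powerset.filter
    (fun A => A.Nonempty ∧ Nat.gcd (A.gcd id) n = 1)).card

open Finset

def gcdFiber (n g : ℕ) : Finset (Finset ℕ) :=
  ((Icc 1 n).powerset.filter Finset.Nonempty).filter fun A => Nat.gcd (A.gcd id) n = g

lemma card_gcdFiber_one (n : ℕ) : #(gcdFiber n 1) = Phi n := by
  rw [gcdFiber, filter_filter, Phi]

lemma gcd_image_mul_left (s : Finset ℕ) (g : ℕ) : (s.image (g * ·)).gcd id = g * s.gcd id := by
  rw [gcd_image]
  simpa using Finset.gcd_mul_left (s := s) (f := id) (a := g)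

lemma image_mul_left_subset_Icc_iff {g : ℕ} (hg : 0 < g) (m : ℕ) (s : Finset ℕ) :
    s.image (g * ·) ⊆ Icc 1 (g * m) ↔ s ⊆ Icc 1 m := by
  simp [subset_iff, Nat.mul_le_mul_left_iff hg, Nat.one_le_iff_ne_zero, hg.ne']

lemma image_mul_left_mem_gcdFiber_iff {g : ℕ} (hg : 0 < g) (m : ℕ) (s : Finset ℕ) :
    s.image (g * ·) ∈ gcdFiber (g * m) g ↔ s ∈ gcdFiber m 1 := by
  simp only [gcdFiber, mem_filter, mem_powerset, image_nonempty, gcd_image_mul_left,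
    Nat.gcd_mul_left, image_mul_left_subset_Icc_iff hg, Nat.mul_eq_left hg.ne']

lemma dvd_of_mem_gcdFiber {n g : ℕ} {A : Finset ℕ} (hA : A ∈ gcdFiber n g) {a : ℕ}
    (ha : a ∈ A) : g ∣ a := by
  rw [gcdFiber, mem_filter] at hA
  exact hA.2 ▸ (Nat.gcd_dvd_left _ _).trans (Finset.gcd_dvd (f := id) ha)

lemma card_gcdFiber_mul {g : ℕ} (hg : 0 < g) (m : ℕ) : #(gcdFiber (g * m) g) = Phi m := by
  rw [← card_gcdFiber_one]
  symm
  refine card_nbij (image (g * ·)) (fun s hs ↦ (image_mul_left_mem_gcdFiber_iff hg m s).2 hs)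
    (image_injective (mul_right_injective₀ hg.ne')).injOn fun A hA ↦ ?_
  obtain ⟨s, -, rfl⟩ := (subset_set_image_iff (s := Set.univ) (f := (g * ·))).1 fun a ha ↦ by
    obtain ⟨c, rfl⟩ := dvd_of_mem_gcdFiber hA ha
    exact ⟨c, trivial, rfl⟩
  exact ⟨s, (image_mul_left_mem_gcdFiber_iff hg m s).1 hA, rfl⟩

lemma card_powerset_filter_nonempty {α : Type*} [DecidableEq α] (s : Finset α) :
    #(s.powerset.filter Finset.Nonempty) = 2 ^ #s - 1 := by
  rw [← card_powerset, ← card_erase_of_mem (empty_mem_powerset s)]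
  congr 1
  ext A
  simp [nonempty_iff_ne_empty, and_comm]

lemma sum_card_gcdFiber {n : ℕ} (hn : n ≠ 0) :
    ∑ g ∈ n.divisors, #(gcdFiber n g) = 2 ^ n - 1 :=
  calc ∑ g ∈ n.divisors, #(gcdFiber n g)
      = #((Icc 1 n).powerset.filter Finset.Nonempty) := (card_eq_sum_card_fiberwise
        fun A _ ↦ Nat.mem_divisors.2 ⟨Nat.gcd_dvd_right _ _, hn⟩).symm
    _ = 2 ^ n - 1 := by rw [card_powerset_filter_nonempty, Nat.card_Icc, Nat.add_sub_cancel]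

theorem sum_Phi_divisors_general (n : ℕ) :
    ∑ d ∈ n.divisors, Phi d = 2 ^ n - 1 := by
  rcases Nat.eq_zero_or_pos n with rfl | hn
  · simp
  calc ∑ d ∈ n.divisors, Phi d
      = ∑ g ∈ n.divisors, Phi (n / g) := (Nat.sum_div_divisors n Phi).symm
    _ = ∑ g ∈ n.divisors, #(gcdFiber n g) := sum_congr rfl fun g hg ↦ by
        have hg_pos : 0 < g := Nat.pos_of_mem_divisors hg
        obtain ⟨m, rfl⟩ := Nat.dvd_of_mem_divisors hg
        rw [card_gcdFiber_mul hg_pos, Nat.mul_div_cancel_left m hg_pos]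
    _ = 2 ^ n - 1 := sum_card_gcdFiber hn.ne'

theorem sum_Phi_divisors (n : ℕ) (hn : 0 < n) :
    ∑ d ∈ n.divisors, Phi d = 2 ^ n - 1 :=
  sum_Phi_divisors_general n
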